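/- Let p be a graded Lie algebra with grading (g_k)_{k ∈ ℤ} satisfying condition (P2), and let H ∈ g_0 satisfy [H, X] = jX for all X ∈ g_{-j} and all j ≥ 1. Then [H, U] = -kU for every U ∈ g_k and every k ∈ ℤ; in particular H lies in the centre of the subalgebra g_0. -/

import Mathlib

/-- The subspace spanned by brackets of elements of two subspaces of a Lie algebra. -/
def bracketSpan {p : Type*} [LieRing p] [LieAlgebra ℝ p] (A B : Submodule ℝ p) :
    Submodule ℝ p :=
  Submodule.span ℝ {z : p | ∃ x ∈ A, ∃ y ∈ B, z = ⁅x, y⁆}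

/-- A grading `(g k)_{k ∈ ℤ}` of a Lie algebra `p`: the `g k` give a direct sum
decomposition of `p`, all but finitely many of them are zero, and
`[g j, g k] ⊆ g (j + k)`. -/
structure IsGradedLieAlgebra {p : Type*} [LieRing p] [LieAlgebra ℝ p]
    (g : ℤ → Submodule ℝ p) : Prop where
  isInternal : DirectSum.IsInternal g
  finite : {k : ℤ | g k ≠ ⊥}.Finite
  bracket_mem : ∀ j k : ℤ, ∀ x ∈ g j, ∀ y ∈ g k, ⁅x, y⁆ ∈ g (j + k)

/-- Condition (P2): if `U ∈ g k` with `k ≥ 0` and `[U, X] = 0` for all `X ∈ g (-1)`,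
then `U = 0`. -/
def CondP2 {p : Type*} [LieRing p] [LieAlgebra ℝ p] (g : ℤ → Submodule ℝ p) : Prop :=
  ∀ k : ℤ, 0 ≤ k → ∀ U ∈ g k, (∀ X ∈ g (-1), ⁅U, X⁆ = 0) → U = 0

/-- Inductive step: if the eigenvalue formula holds on `g (m-1)`, it holds on `g m`
for `m ≥ 0`. -/
lemma bracket_grading_step
    {p : Type*} [LieRing p] [LieAlgebra ℝ p] {g : ℤ → Submodule ℝ p}
    (hgr : IsGradedLieAlgebra g) (hP2 : CondP2 g)
    {H : p} (hH0 : H ∈ g 0)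
    (hH1 : ∀ X ∈ g (-1), ⁅H, X⁆ = (1 : ℝ) • X)
    {m : ℤ} (hm : 0 ≤ m)
    (hprev : ∀ W ∈ g (m - 1), ⁅H, W⁆ = (-((m : ℝ) - 1)) • W) :
    ∀ U ∈ g m, ⁅H, U⁆ = (-(m : ℝ)) • U := by
  intro U hU
  have hVmem : ⁅H, U⁆ + (m : ℝ) • U ∈ g m := by
    have := hgr.bracket_mem 0 m H hH0 U hU
    rw [zero_add] at this
    exact (g m).add_mem this ((g m).smul_mem _ hU)
  have hV0 : ⁅H, U⁆ + (m : ℝ) • U = 0 := by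
    apply hP2 m hm _ hVmem
    intro X hX
    have hW : ⁅U, X⁆ ∈ g (m - 1) := by
      have := hgr.bracket_mem m (-1) U hU X hX
      simpa [sub_eq_add_neg] using this
    have h1 : ⁅H, ⁅U, X⁆⁆ = (-((m : ℝ) - 1)) • ⁅U, X⁆ := hprev _ hW
    have h2 : ⁅H, X⁆ = X := by simpa using hH1 X hX
    have h3 : ⁅⁅H, U⁆, X⁆ = ⁅H, ⁅U, X⁆⁆ - ⁅U, ⁅H, X⁆⁆ := lie_lie H U X
    rw [add_lie, smul_lie, h3, h1, h2]
    ring_nf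
    module
  linear_combination (norm := module) hV0

/-- in a graded Lie algebra satisfying (P2), if `H ∈ g 0` satisfies
`[H, X] = j • X` for all `X ∈ g (-j)`, `j ≥ 1`, then `[H, U] = -k • U` for all `U ∈ g k`
and all `k ∈ ℤ`; in particular `H` is in the centre of `g 0`. -/
theorem bracket_grading_element_eq_smul
    {p : Type*} [LieRing p] [LieAlgebra ℝ p] {g : ℤ → Submodule ℝ p}
    (hgr : IsGradedLieAlgebra g) (hP2 : CondP2 g)
    {H : p} (hH0 : H ∈ g 0)
    (hH : ∀ j : ℕ, 1 ≤ j → ∀ X ∈ g (-(j : ℤ)), ⁅H, X⁆ = (j : ℝ) • X) :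
    (∀ k : ℤ, ∀ U ∈ g k, ⁅H, U⁆ = (-(k : ℝ)) • U) ∧
      ∀ U ∈ g 0, ⁅H, U⁆ = 0 := by
  have hH1 : ∀ X ∈ g (-1), ⁅H, X⁆ = (1 : ℝ) • X := by
    intro X hX
    have := hH 1 le_rfl X (by simpa using hX)
    simpa using this
  have hnonneg : ∀ k : ℤ, 0 ≤ k → ∀ U ∈ g k, ⁅H, U⁆ = (-(k : ℝ)) • U := by
    refine Int.le_induction (motive := fun k _ => ∀ U ∈ g k, ⁅H, U⁆ = (-(k : ℝ)) • U) ?_ ?_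
    · have hprev : ∀ W ∈ g ((0 : ℤ) - 1), ⁅H, W⁆ = (-(((0 : ℤ) : ℝ) - 1)) • W := by
        intro W hW
        have := hH1 W (by simpa using hW)
        rw [this]; norm_num
      exact bracket_grading_step hgr hP2 hH0 hH1 le_rfl hprev
    · intro k hk ih
      have hprev : ∀ W ∈ g (k + 1 - 1), ⁅H, W⁆ = (-(((k + 1 : ℤ) : ℝ) - 1)) • W := by
        intro W hW
        have := ih W (by simpa using hW)
        rw [this]; push_cast; ring_nf
      exact bracket_grading_step hgr hP2 hH0 hH1 (by omega) hprev
  constructor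
  · intro k U hU
    rcases le_or_gt 0 k with hk | hk
    · exact hnonneg k hk U hU
    · have hj : k = -((-k).toNat : ℤ) := by omega
      have hj1 : 1 ≤ (-k).toNat := by omega
      have := hH (-k).toNat hj1 U (by rw [← hj]; exact hU)
      rw [this]
      congr 1
      have h : ((-k).toNat : ℤ) = -k := Int.toNat_of_nonneg (by omega)
      have : (((-k).toNat : ℤ) : ℝ) = ((-k : ℤ) : ℝ) := by rw [h]
      push_cast at this ⊢
      linarith
  · intro U hU
    have := hnonneg 0 le_rfl U hU
    simpa using this
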